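/- arXiv:1301.2041 — 2 statements merged into one kernel-verified Lean document; each statement's English description precedes it below -/
import Mathlib

section
/- For every nonempty q-ary code C of length n and every e ∈ [q], E(e; C) ≥ f*_{n,q}(e), where f*_{n,q}(e) = r·e for e ≤ q − t and f*_{n,q}(e) = r(q−t) + (e−q+t)(r−1) otherwise, with r = ⌈n/q⌉ and t = q·r − n. Moreover, equality holds for all e ∈ [q] if and only if C is an equitable symbol weight code. -/
/-- Number of occurrences of the symbol `σ` in the word `u`. -/
def symbolCount {n : ℕ} {A : Type*} [Fintype A] [DecidableEq A]
    (u : Fin n → A) (σ : A) : ℕ :=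
  (Finset.univ.filter fun i => u i = σ).card

/-- `E(e; C)`. -/
def EC {n : ℕ} {A : Type*} [Fintype A] [DecidableEq A]
    (C : Finset (Fin n → A)) (e : ℕ) : ℕ :=
  C.sup fun c => (Finset.univ.powersetCard e).sup fun Γ => ∑ σ ∈ Γ, symbolCount c σ

/-- The extremal function `f*_{n,q}` with `r = ⌈n/q⌉` and `t = q·r − n`. -/
def fstar (n q e : ℕ) : ℕ :=
  let r := (n + q - 1) / q
  let t := q * r - n
  if e ≤ q - t then r * e else r * (q - t) + (e - (q - t)) * (r - 1)

lemma sum_symbolCount {n q : ℕ} {A : Type*} [Fintype A] [DecidableEq A]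
    (hq : Fintype.card A = q) (c : Fin n → A) :
    ∑ σ : A, symbolCount c σ = n := by
  unfold symbolCount
  have := Finset.card_eq_sum_card_fiberwise
    (f := c) (s := (Finset.univ : Finset (Fin n))) (t := Finset.univ)
    (fun i _ => Finset.mem_univ (c i))
  simpa using this.symm

lemma le_EC {n : ℕ} {A : Type*} [Fintype A] [DecidableEq A]
    (C : Finset (Fin n → A)) (e : ℕ) {c : Fin n → A} (hc : c ∈ C) :
    ((Finset.univ.powersetCard e).sup fun Γ => ∑ σ ∈ Γ, symbolCount c σ) ≤ EC C e :=
  Finset.le_sup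
    (f := fun c => (Finset.univ.powersetCard e).sup fun Γ => ∑ σ ∈ Γ, symbolCount c σ) hc

lemma sup_lower {n q : ℕ} {A : Type*} [Fintype A] [DecidableEq A]
    (hq : Fintype.card A = q) (c : Fin n → A) {r t e : ℕ}
    (ht : q * r = n + t) (htq : t < q) (he1 : 1 ≤ e) (he2 : e ≤ q) :
    (if e ≤ q - t then r * e else r * (q - t) + (e - (q - t)) * (r - 1))
      ≤ (Finset.univ.powersetCard e).sup fun Γ => ∑ σ ∈ Γ, symbolCount c σ := by
  have hcard : (Finset.univ : Finset A).card = q := by rw [Finset.card_univ, hq]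
  have hne : ((Finset.univ : Finset A).powersetCard e).Nonempty :=
    Finset.powersetCard_nonempty.2 (by rw [hcard]; exact he2)
  obtain ⟨Γ, hΓmem, hΓsup⟩ := Finset.exists_mem_eq_sup _ hne
    (fun Γ => ∑ σ ∈ Γ, symbolCount c σ)
  rw [hΓsup]
  have hΓcard : Γ.card = e := Finset.mem_powersetCard_univ.1 hΓmem
  -- swap property : elements inside Γ have counts ≥ those outside
  have hswap : ∀ σ ∈ Γ, ∀ τ, τ ∉ Γ → symbolCount c τ ≤ symbolCount c σ := by
    intro σ hσ τ hτ
    by_contra hlt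
    push_neg at hlt
    have hτe : τ ∉ Γ.erase σ := fun h => hτ (Finset.mem_of_mem_erase h)
    have hmem' : insert τ (Γ.erase σ) ∈ (Finset.univ : Finset A).powersetCard e := by
      rw [Finset.mem_powersetCard_univ, Finset.card_insert_of_notMem hτe,
        Finset.card_erase_of_mem hσ, hΓcard]
      omega
    have hle : ∑ x ∈ insert τ (Γ.erase σ), symbolCount c x ≤ ∑ x ∈ Γ, symbolCount c x := by
      simpa [hΓsup] using Finset.le_sup (f := fun Γ => ∑ σ ∈ Γ, symbolCount c σ) hmem'
    have h1 : ∑ x ∈ insert τ (Γ.erase σ), symbolCount c x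
        = symbolCount c τ + ∑ x ∈ Γ.erase σ, symbolCount c x := Finset.sum_insert hτe
    have h2 : ∑ x ∈ Γ.erase σ, symbolCount c x + symbolCount c σ
        = ∑ x ∈ Γ, symbolCount c x := Finset.sum_erase_add _ _ hσ
    omega
  have htot : ∑ σ ∈ Γ, symbolCount c σ + ∑ σ ∈ Γᶜ, symbolCount c σ = n := by
    rw [Finset.sum_add_sum_compl]
    exact sum_symbolCount hq c
  have hccard : Γᶜ.card = q - e := by
    rw [Finset.card_compl, hΓcard, hq]
  split_ifs with hcase
  · -- e ≤ q - t : show r * e ≤ S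
    by_contra hcon
    push_neg at hcon
    have hr1 : 1 ≤ r := by
      rcases Nat.eq_zero_or_pos r with h | h
      · rw [h, Nat.zero_mul] at hcon; omega
      · exact h
    have hex : ∃ σ0 ∈ Γ, symbolCount c σ0 < r := by
      by_contra h
      push_neg at h
      have := Finset.card_nsmul_le_sum Γ (fun σ => symbolCount c σ) r h
      rw [hΓcard, smul_eq_mul, mul_comm e r] at this
      exact Nat.lt_irrefl _ (lt_of_le_of_lt this hcon)
    obtain ⟨σ0, hσ0, hσ0r⟩ := hex
    have hSc : ∑ σ ∈ Γᶜ, symbolCount c σ ≤ (q - e) * (r - 1) := by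
      have hb : ∀ τ ∈ Γᶜ, symbolCount c τ ≤ r - 1 := fun τ hτ =>
        le_trans (hswap σ0 hσ0 τ (Finset.mem_compl.1 hτ)) (by omega)
      have := Finset.sum_le_card_nsmul Γᶜ _ (r - 1) hb
      rwa [hccard, smul_eq_mul] at this
    obtain ⟨q2, hq2⟩ : ∃ q2, q = e + q2 := ⟨q - e, by omega⟩
    obtain ⟨r2, hr2⟩ : ∃ r2, r = r2 + 1 := ⟨r - 1, by omega⟩
    have hteq : t ≤ q2 := by omega
    rw [hq2, hr2] at ht
    rw [hr2] at hcon
    rw [show q - e = q2 by omega, show r - 1 = r2 by omega] at hSc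
    linarith [ht, hcon, hSc, htot, hteq]
  · -- q - t < e
    push_neg at hcase
    have ht1 : 1 ≤ t := by omega
    have hr1 : 1 ≤ r := by
      rcases Nat.eq_zero_or_pos r with h | h
      · rw [h, Nat.mul_zero] at ht; omega
      · exact h
    obtain ⟨r2, hr2⟩ : ∃ r2, r = r2 + 1 := ⟨r - 1, by omega⟩
    obtain ⟨u, hu⟩ : ∃ u, q = t + u ∧ 1 ≤ u := ⟨q - t, by omega⟩
    rcases eq_or_lt_of_le he2 with heq | hlt
    · -- e = q : Γ = univ
      have hΓu : Γ = Finset.univ := Finset.eq_univ_of_card Γ (by rw [hΓcard, heq, hq])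
      have hS : ∑ σ ∈ Γ, symbolCount c σ = n := by rw [hΓu]; exact sum_symbolCount hq c
      rw [hS, show e - (q - t) = t by omega, show q - t = u by omega,
        show r - 1 = r2 by omega, hr2]

      have ht' : (t + u) * (r2 + 1) = n + t := by
        rw [show t + u = q by omega, show r2 + 1 = r by omega]; exact ht
      linarith [ht']
    · by_contra hcon
      push_neg at hcon
      obtain ⟨e2, he2'⟩ : ∃ e2, e = u + e2 ∧ 1 ≤ e2 := ⟨e - u, by omega⟩
      obtain ⟨q2, hqq⟩ : ∃ q2, q = e + q2 ∧ 1 ≤ q2 := ⟨q - e, by omega⟩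
      have hteq : t = e2 + q2 := by omega
      rw [show e - (q - t) = e2 by omega, show q - t = u by omega,
        show r - 1 = r2 by omega, hr2] at hcon
      have ht' : (t + u) * (r2 + 1) = n + t := by
        rw [show t + u = q by omega, show r2 + 1 = r by omega]; exact ht
      by_cases hex : ∃ τ ∈ Γᶜ, r2 + 1 ≤ symbolCount c τ
      · obtain ⟨τ, hτ, hτr⟩ := hex
        have hb : ∀ σ ∈ Γ, r2 + 1 ≤ symbolCount c σ := fun σ hσ =>
          le_trans hτr (hswap σ hσ τ (Finset.mem_compl.1 hτ))
        have hS := Finset.card_nsmul_le_sum Γ (fun σ => symbolCount c σ) (r2 + 1) hb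
        rw [hΓcard, smul_eq_mul, show e = u + e2 by omega] at hS
        linarith [hS, hcon, he2'.2]
      · push_neg at hex
        have hSc : ∑ σ ∈ Γᶜ, symbolCount c σ ≤ q2 * r2 := by
          have hb : ∀ τ ∈ Γᶜ, symbolCount c τ ≤ r2 := fun τ hτ => by
            have := hex τ hτ; omega
          have := Finset.sum_le_card_nsmul Γᶜ _ r2 hb
          rwa [hccard, smul_eq_mul, show q - e = q2 by omega] at this
        rw [hteq] at ht'
        linarith [hSc, hcon, htot, ht']

lemma sum_upper {n q : ℕ} {A : Type*} [Fintype A] [DecidableEq A]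
    (hq : Fintype.card A = q) (c : Fin n → A) {r t e : ℕ}
    (ht : q * r = n + t) (htq : t < q)
    (hc : ∀ σ, symbolCount c σ = r - 1 ∨ symbolCount c σ = r)
    (Γ : Finset A) (hΓcard : Γ.card = e) :
    ∑ σ ∈ Γ, symbolCount c σ
      ≤ if e ≤ q - t then r * e else r * (q - t) + (e - (q - t)) * (r - 1) := by
  have hcard : (Finset.univ : Finset A).card = q := by rw [Finset.card_univ, hq]
  have heq : e ≤ q := by rw [← hΓcard, ← hcard]; exact Finset.card_le_card (Finset.subset_univ Γ)
  split_ifs with hcase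
  · -- every count is ≤ r
    have hb : ∀ σ ∈ Γ, symbolCount c σ ≤ r := fun σ _ => by rcases hc σ with h | h <;> omega
    have := Finset.sum_le_card_nsmul Γ _ r hb
    rwa [hΓcard, smul_eq_mul, mul_comm e r] at this
  · push_neg at hcase
    have ht1 : 1 ≤ t := by omega
    have hr1 : 1 ≤ r := by
      rcases Nat.eq_zero_or_pos r with h | h
      · rw [h, Nat.mul_zero] at ht; omega
      · exact h
    obtain ⟨r2, hr2⟩ : ∃ r2, r = r2 + 1 := ⟨r - 1, by omega⟩
    set D : Finset A := Finset.univ.filter (fun σ => symbolCount c σ = r) with hD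
    set K := D.card with hKdef
    set M := (Finset.univ.filter (fun σ => ¬ symbolCount c σ = r)).card with hMdef
    have hKM : K + M = q := by
      rw [hKdef, hMdef, hD, Finset.card_filter_add_card_filter_not, hcard]
    have hsumD : ∑ σ ∈ D, symbolCount c σ = K * r := by
      rw [Finset.sum_congr rfl (fun σ hσ => (Finset.mem_filter.1 hσ).2),
        Finset.sum_const, smul_eq_mul]
    have hsumM : ∑ σ ∈ Finset.univ.filter (fun σ => ¬ symbolCount c σ = r),
        symbolCount c σ = M * r2 := by
      rw [Finset.sum_congr rfl (fun σ hσ => ?_), Finset.sum_const, smul_eq_mul]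
      have h2 := (Finset.mem_filter.1 hσ).2
      rcases hc σ with h | h
      · omega
      · exact absurd h h2
    have hsplit : ∑ σ ∈ D, symbolCount c σ
        + ∑ σ ∈ Finset.univ.filter (fun σ => ¬ symbolCount c σ = r), symbolCount c σ
        = n := by
      rw [hD, Finset.sum_filter_add_sum_filter_not]
      exact sum_symbolCount hq c
    rw [hsumD, hsumM] at hsplit
    -- K = q - t
    have hMt : M = t := by
      have ht'' : (K + M) * (r2 + 1) = n + t := by
        rw [hKM, show r2 + 1 = r by omega]; exact ht
      rw [hr2] at hsplit
      linarith [ht'', hsplit]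
    -- now the Γ sum
    have hk1 : (Γ ∩ D).card ≤ K := Finset.card_le_card Finset.inter_subset_right
    have hk2 : (Γ \ D).card + (Γ ∩ D).card = e := by
      rw [Finset.card_sdiff_add_card_inter, hΓcard]
    have hsum1 : ∑ σ ∈ Γ ∩ D, symbolCount c σ = (Γ ∩ D).card * r := by
      rw [Finset.sum_congr rfl
          (fun σ hσ => (Finset.mem_filter.1 (Finset.mem_inter.1 hσ).2).2),
        Finset.sum_const, smul_eq_mul]
    have hsum2 : ∑ σ ∈ Γ \ D, symbolCount c σ = (Γ \ D).card * r2 := by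
      rw [Finset.sum_congr rfl (fun σ hσ => ?_), Finset.sum_const, smul_eq_mul]
      have h2 := (Finset.mem_sdiff.1 hσ).2
      rcases hc σ with h | h
      · omega
      · exact absurd (by rw [hD, Finset.mem_filter]; exact ⟨Finset.mem_univ σ, h⟩) h2
    have hsumΓ : ∑ σ ∈ Γ, symbolCount c σ = (Γ ∩ D).card * r + (Γ \ D).card * r2 := by
      rw [← Finset.sum_inter_add_sum_sdiff Γ D (symbolCount c), hsum1, hsum2]
    rw [hsumΓ]
    -- abbreviations
    set k := (Γ ∩ D).card
    have hKqt : q - t = K := by omega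
    rw [hKqt, show r - 1 = r2 by omega, hr2]
    obtain ⟨k', hk'⟩ : ∃ k', K = k + k' := ⟨K - k, by omega⟩
    obtain ⟨e3, he3⟩ : ∃ e3, e = K + e3 := ⟨e - K, by omega⟩
    rw [show (Γ \ D).card = k' + e3 by omega, show e - K = e3 by omega, hk']
    ring_nf
    linarith


/-- `E(e; C) ≥ f*_{n,q}(e)` for all `e ∈ [q]`, with equality for all
`e ∈ [q]` if and only if `C` is an equitable symbol weight code. -/
theorem stmt6 {n q : ℕ} {A : Type*} [Fintype A] [DecidableEq A]
    (hq : Fintype.card A = q) (hq1 : 1 ≤ q)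
    (C : Finset (Fin n → A)) (hC : C.Nonempty) :
    (∀ e, 1 ≤ e → e ≤ q → fstar n q e ≤ EC C e) ∧
    ((∀ e, 1 ≤ e → e ≤ q → EC C e = fstar n q e) ↔
      ∀ c ∈ C, ∀ σ : A,
        symbolCount c σ = n / q ∨ symbolCount c σ = (n + q - 1) / q) := by
  classical
  obtain ⟨r, t, ht, htq, hrdef⟩ : ∃ r t, q * r = n + t ∧ t < q ∧ r = (n + q - 1) / q := by
    refine ⟨(n + q - 1) / q, q * ((n + q - 1) / q) - n, ?_, ?_, rfl⟩ <;>
    · have h1 := Nat.div_add_mod (n + q - 1) q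
      have h2 : (n + q - 1) % q < q := Nat.mod_lt _ hq1
      generalize q * ((n + q - 1) / q) = m at *
      omega
  have hteq : q * r - n = t := by rw [ht]; omega
  have hfstar : ∀ e, fstar n q e
      = if e ≤ q - t then r * e else r * (q - t) + (e - (q - t)) * (r - 1) := by
    intro e; simp only [fstar, ← hrdef, hteq]
  have hr1 : 1 ≤ t → 1 ≤ r := by
    intro h1
    rcases Nat.eq_zero_or_pos r with h | h
    · rw [h, Nat.mul_zero] at ht; omega
    · exact h
  have hnq0 : t = 0 → n / q = r := by
    intro h0
    have hn : q * r = n := by rw [ht, h0]; omega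
    rw [← hn, Nat.mul_div_cancel_left _ (by omega : 0 < q)]
  have hnq1 : 1 ≤ t → n / q = r - 1 := by
    intro h1
    obtain ⟨r2, hr2⟩ : ∃ r2, r = r2 + 1 := ⟨r - 1, by have := hr1 h1; omega⟩
    have ht2 : q * r2 + q = n + t := by rw [hr2, Nat.mul_add, Nat.mul_one] at ht; exact ht
    have hn2 : n = (q - t) + q * r2 := by
      generalize q * r2 = m at ht2 ⊢
      omega
    rw [hn2, Nat.add_mul_div_left _ _ (by omega : 0 < q),
      Nat.div_eq_of_lt (by omega), hr2]
    omega
  have lower : ∀ e, 1 ≤ e → e ≤ q → fstar n q e ≤ EC C e := by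
    intro e he1 he2
    obtain ⟨c, hc⟩ := hC
    rw [hfstar]
    exact le_trans (sup_lower hq c ht htq he1 he2) (le_EC C e hc)
  refine ⟨lower, ?_, ?_⟩
  · -- equality → equitable
    intro heqs c hcmem σ
    have hle : ∀ c' ∈ C, ∀ σ' : A, symbolCount c' σ' ≤ r := by
      intro c' hc' σ'
      have h1 : ({σ'} : Finset A) ∈ (Finset.univ : Finset A).powersetCard 1 := by
        rw [Finset.mem_powersetCard_univ, Finset.card_singleton]
      have h2 : symbolCount c' σ' ≤ EC C 1 :=
        le_trans (le_of_eq (Finset.sum_singleton (symbolCount c') σ').symm)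
          (le_trans (Finset.le_sup (f := fun Γ => ∑ x ∈ Γ, symbolCount c' x) h1) (le_EC C 1 hc'))
      have h3 : EC C 1 = r := by
        rw [heqs 1 le_rfl hq1, hfstar, if_pos (by omega), Nat.mul_one]
      omega
    rcases Nat.eq_zero_or_pos t with ht0 | ht1
    · right
      rw [← hrdef]
      by_contra hne
      have hlt : symbolCount c σ < r := lt_of_le_of_ne (hle c hcmem σ) hne
      obtain ⟨q2, hq2⟩ : ∃ q2, q = q2 + 1 := ⟨q - 1, by omega⟩
      have herase : ∑ σ' ∈ Finset.univ.erase σ, symbolCount c σ' + symbolCount c σ = n := by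
        rw [Finset.sum_erase_add _ _ (Finset.mem_univ σ)]; exact sum_symbolCount hq c
      have hbound : ∑ σ' ∈ Finset.univ.erase σ, symbolCount c σ' ≤ q2 * r := by
        have := Finset.sum_le_card_nsmul (Finset.univ.erase σ) _ r
          (fun τ _ => hle c hcmem τ)
        rwa [Finset.card_erase_of_mem (Finset.mem_univ σ), Finset.card_univ, hq,
          show q - 1 = q2 by omega, smul_eq_mul] at this
      rw [hq2] at ht
      linarith [ht, herase, hbound, hlt, ht0]
    · -- t ≥ 1
      have hnq := hnq1 ht1
      by_contra hboth
      push_neg at hboth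
      obtain ⟨hb1, hb2⟩ := hboth
      rw [hnq] at hb1
      rw [← hrdef] at hb2
      have hcle := hle c hcmem σ
      have hr1' := hr1 ht1
      have hcnt : symbolCount c σ + 2 ≤ r := by omega
      have hqge2 : 2 ≤ q := by omega
      have hfq : fstar n q (q - 1) + r = n + 1 := by
        rw [hfstar]
        split_ifs with h
        · have ht1' : t = 1 := by omega
          have h3 : r * (q - 1) + r = r * q := by
            obtain ⟨q2, hq2⟩ : ∃ q2, q = q2 + 1 := ⟨q - 1, by omega⟩
            rw [hq2, Nat.add_sub_cancel]; ring
          rw [h3, mul_comm r q, ht, ht1']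
        · obtain ⟨r2, hr2⟩ : ∃ r2, r = r2 + 1 := ⟨r - 1, by omega⟩
          obtain ⟨u, hu⟩ : ∃ u, q = t + u ∧ 1 ≤ u := ⟨q - t, by omega⟩
          obtain ⟨t1, ht1''⟩ : ∃ t1, t = t1 + 1 := ⟨t - 1, by omega⟩
          rw [show q - 1 - (q - t) = t1 by omega, show q - t = u by omega,
            show r - 1 = r2 by omega, hr2]
          have ht3 : (t1 + 1 + u) * (r2 + 1) = n + (t1 + 1) := by
            rw [show t1 + 1 + u = q by omega, show r2 + 1 = r by omega, ht, ht1'']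
          linarith [ht3]
      have h1 : Finset.univ.erase σ ∈ (Finset.univ : Finset A).powersetCard (q - 1) := by
        rw [Finset.mem_powersetCard_univ, Finset.card_erase_of_mem (Finset.mem_univ σ),
          Finset.card_univ, hq]
      have h2 : ∑ x ∈ Finset.univ.erase σ, symbolCount c x ≤ EC C (q - 1) :=
        le_trans (Finset.le_sup (f := fun Γ => ∑ x ∈ Γ, symbolCount c x) h1) (le_EC C (q - 1) hcmem)
      rw [heqs (q - 1) (by omega) (by omega)] at h2
      have herase : ∑ x ∈ Finset.univ.erase σ, symbolCount c x + symbolCount c σ = n := by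
        rw [Finset.sum_erase_add _ _ (Finset.mem_univ σ)]; exact sum_symbolCount hq c
      linarith [hfq, h2, herase, hcnt]
  · -- equitable → equality
    intro hESW e he1 he2
    refine le_antisymm ?_ (lower e he1 he2)
    rw [hfstar]
    unfold EC
    refine Finset.sup_le fun c hc => Finset.sup_le fun Γ hΓ => ?_
    refine sum_upper hq c ht htq ?_ Γ (Finset.mem_powersetCard_univ.1 hΓ)
    intro σ
    rcases hESW c hc σ with h | h
    · rcases Nat.eq_zero_or_pos t with ht0 | ht1
      · right; rw [h, hnq0 ht0]
      · left; rw [h, hnq1 ht1]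
    · right; rw [h, ← hrdef]
end

section
/- Let C be a q-ary code of length n with minimum Hamming distance d. If the numbers of errors satisfy e_DEL + e_IMP + e_INS + E(e_F; C) + E(e_N; C) < d, then for any transmitted codeword u ∈ C and any detector output v ∈ (2^Σ)^n resulting from e_N narrowband noise errors (of duration n), e_F signal fading errors, e_IMP impulse noise errors, e_INS insertion errors, and e_DEL deletion errors applied to u, the minimum distance decoder uniquely outputs u, i.e., d(u, v) < d(w, v) for all w ∈ C, w ≠ u. -/
/-- Distance between a word `u` and a detector output `v ∈ (2^Σ)^n`:
the number of coordinates `i` with `u i ∉ v i`. -/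
def distOut {n : ℕ} {A : Type*} [Fintype A] [DecidableEq A]
    (u : Fin n → A) (v : Fin n → Finset A) : ℕ :=
  (Finset.univ.filter fun i => u i ∉ v i).card

lemma card_filter_mem_eq_sum {n : ℕ} {A : Type*} [Fintype A] [DecidableEq A]
    (c : Fin n → A) (Γ : Finset A) :
    (Finset.univ.filter fun i => c i ∈ Γ).card = ∑ σ ∈ Γ, symbolCount c σ := by
  classical
  have h : (Finset.univ.filter fun i => c i ∈ Γ)
      = Γ.biUnion (fun σ => Finset.univ.filter fun i => c i = σ) := by
    ext i
    simp [Finset.mem_biUnion, eq_comm]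
  rw [h, Finset.card_biUnion]
  · rfl
  · intro a _ b _ hab
    simp only [Finset.disjoint_left, Finset.mem_filter]
    rintro i ⟨_, rfl⟩ ⟨_, rfl⟩
    exact hab rfl

lemma sum_le_EC {n : ℕ} {A : Type*} [Fintype A] [DecidableEq A]
    {C : Finset (Fin n → A)} {c : Fin n → A} (hc : c ∈ C)
    (Γ : Finset A) {e : ℕ} (hΓ : Γ.card = e) :
    ∑ σ ∈ Γ, symbolCount c σ ≤ EC C e := by
  have h1 : Γ ∈ Finset.univ.powersetCard e :=
    Finset.mem_powersetCard.mpr ⟨Finset.subset_univ _, hΓ⟩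
  calc ∑ σ ∈ Γ, symbolCount c σ
      ≤ (Finset.univ.powersetCard e).sup fun Γ => ∑ σ ∈ Γ, symbolCount c σ :=
        Finset.le_sup (f := fun Γ => ∑ σ ∈ Γ, symbolCount c σ) h1
    _ ≤ EC C e := Finset.le_sup (f := fun c => (Finset.univ.powersetCard e).sup fun Γ => ∑ σ ∈ Γ, symbolCount c σ) hc

/-- if `e_DEL + e_IMP + e_INS + E(e_F;C) + E(e_N;C) < d`, then for
any transmitted codeword `u ∈ C` and any detector output `v` obtained from `u`
by `e_N` narrowband noise errors of duration `n` (a set `ΓN` of symbols added to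
every coordinate), `e_F` signal fading errors (a set `ΓF` of symbols removed
everywhere), `e_IMP` impulse noise errors (coordinates set to the whole
alphabet), at most `e_INS` insertions, and at most `e_DEL` deletions, the
minimum distance decoder uniquely returns `u`: `d(u,v) < d(w,v)` for every
other codeword `w ∈ C`. -/
theorem stmt15 {n q : ℕ} {A : Type*} [Fintype A] [DecidableEq A]
    (hq : Fintype.card A = q) (hq1 : 1 ≤ q)
    (C : Finset (Fin n → A)) (d : ℕ)
    (hmin : ∀ x ∈ C, ∀ y ∈ C, x ≠ y → d ≤ hammingDist x y)
    (eN eF eIMP eINS eDEL : ℕ)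
    (hcond : eDEL + eIMP + eINS + EC C eF + EC C eN < d)
    (u : Fin n → A) (hu : u ∈ C)
    (v : Fin n → Finset A)
    (ΓN ΓF : Finset A) (hΓN : ΓN.card = eN) (hΓF : ΓF.card = eF)
    (I : Finset (Fin n)) (hI : I.card = eIMP)
    (Ins : Finset (Fin n × A)) (hInsCard : Ins.card ≤ eINS)
    (hIns : ∀ p ∈ Ins, p.2 ≠ u p.1)
    (Del : Finset (Fin n)) (hDel : Del.card ≤ eDEL)
    (hv : ∀ i : Fin n,
      v i = (if i ∈ I then (Finset.univ : Finset A)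
             else (({u i} ∪ ΓN) \ ΓF) ∪ (Ins.filter fun p => p.1 = i).image Prod.snd)
              \ (if i ∈ Del then {u i} else ∅)) :
    ∀ w ∈ C, w ≠ u → distOut u v < distOut w v := by
  classical
  -- upper bound on distOut u v
  have hub : distOut u v ≤ eDEL + EC C eF := by
    have hsub : (Finset.univ.filter fun i => u i ∉ v i)
        ⊆ Del ∪ (Finset.univ.filter fun i => u i ∈ ΓF) := by
      intro i hi
      simp only [Finset.mem_filter, Finset.mem_univ, true_and] at hi
      rw [hv i] at hi
      by_cases hDi : i ∈ Del
      · exact Finset.mem_union_left _ hDi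
      · refine Finset.mem_union_right _ ?_
        simp only [Finset.mem_filter, Finset.mem_univ, true_and]
        simp only [hDi, if_neg, if_false, Finset.sdiff_empty] at hi
        by_cases hIi : i ∈ I
        · simp [hIi] at hi
        · simp only [hIi, if_false, Finset.mem_union, not_or] at hi
          by_contra hF
          exact hi.1 (Finset.mem_sdiff.mpr ⟨Finset.mem_union_left _ (Finset.mem_singleton_self _), hF⟩)
    calc distOut u v ≤ (Del ∪ (Finset.univ.filter fun i => u i ∈ ΓF)).card :=
          Finset.card_le_card hsub
      _ ≤ Del.card + (Finset.univ.filter fun i => u i ∈ ΓF).card :=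
          Finset.card_union_le _ _
      _ ≤ eDEL + EC C eF := by
          refine Nat.add_le_add hDel ?_
          rw [card_filter_mem_eq_sum]
          exact sum_le_EC hu ΓF hΓF
  intro w hw hwu
  -- lower bound on distOut w v
  have hlb : hammingDist w u ≤ distOut w v + eIMP + eINS + EC C eN := by
    have hsub : (Finset.univ.filter fun i => w i ≠ u i)
        ⊆ ((Finset.univ.filter fun i => w i ∉ v i) ∪ I ∪ Ins.image Prod.fst)
          ∪ (Finset.univ.filter fun i => w i ∈ ΓN) := by
      intro i hi
      simp only [Finset.mem_filter, Finset.mem_univ, true_and] at hi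
      by_cases h1 : w i ∉ v i
      · exact Finset.mem_union_left _ (Finset.mem_union_left _
          (Finset.mem_union_left _ (by simp [h1])))
      · push_neg at h1
        by_cases hIi : i ∈ I
        · exact Finset.mem_union_left _ (Finset.mem_union_left _
            (Finset.mem_union_right _ hIi))
        · rw [hv i] at h1
          simp only [hIi, if_false, Finset.mem_sdiff, Finset.mem_union,
            Finset.mem_singleton, Finset.mem_image, Finset.mem_filter] at h1
          rcases h1.1 with (hcase | hcase)
          · rcases hcase with ⟨(heq | hmem), _⟩
            · exact absurd heq hi
            · exact Finset.mem_union_right _ (by simp [hmem])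
          · rcases hcase with ⟨p, ⟨hpIns, hp1⟩, _⟩
            refine Finset.mem_union_left _ (Finset.mem_union_right _ ?_)
            exact Finset.mem_image.mpr ⟨p, hpIns, hp1⟩
    have := Finset.card_le_card hsub
    calc hammingDist w u
        ≤ (((Finset.univ.filter fun i => w i ∉ v i) ∪ I ∪ Ins.image Prod.fst)
          ∪ (Finset.univ.filter fun i => w i ∈ ΓN)).card := this
      _ ≤ ((Finset.univ.filter fun i => w i ∉ v i) ∪ I ∪ Ins.image Prod.fst).card
          + (Finset.univ.filter fun i => w i ∈ ΓN).card := Finset.card_union_le _ _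
      _ ≤ (((Finset.univ.filter fun i => w i ∉ v i) ∪ I).card + (Ins.image Prod.fst).card)
          + (Finset.univ.filter fun i => w i ∈ ΓN).card :=
          Nat.add_le_add_right (Finset.card_union_le _ _) _
      _ ≤ (((Finset.univ.filter fun i => w i ∉ v i).card + I.card) + (Ins.image Prod.fst).card)
          + (Finset.univ.filter fun i => w i ∈ ΓN).card :=
          Nat.add_le_add_right (Nat.add_le_add_right (Finset.card_union_le _ _) _) _
      _ ≤ distOut w v + eIMP + eINS + EC C eN := by
          refine Nat.add_le_add (Nat.add_le_add (Nat.add_le_add ?_ hI.le) ?_) ?_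
          · exact le_of_eq rfl
          · exact le_trans (Finset.card_image_le) hInsCard
          · rw [card_filter_mem_eq_sum]; exact sum_le_EC hw ΓN hΓN
  have hd : d ≤ hammingDist w u := hmin w hw u hu hwu
  omega
end
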